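/- arXiv:1812.11963 — 2 statements merged into one kernel-verified Lean document; each statement's English description precedes it below -/
import Mathlib

section
/- For all natural numbers m, n, k, a with m > 1, k ≥ 1, n ≥ 1 and 1 ≤ a ≤ 9, the equation B_n · B_{n+1} ⋯ B_{n+k} = a·(10^m−1)/9 has no solution. -/
set_option maxRecDepth 10000


def B : ℕ → ℕ
  | 0 => 0
  | 1 => 1
  | n + 2 => 6 * B (n + 1) - B n

def b : ℕ → ZMod 100
  | 0 => 0
  | 1 => 1
  | n + 2 => 6 * b (n + 1) - b n

def tbl : List (ZMod 100) :=
  [0, 1, 6, 35, 4, 89, 30, 91, 16, 5, 14, 79, 60, 81, 26, 75, 24, 69, 90, 71,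
   36, 45, 34, 59, 20, 61, 46, 15, 44, 49, 50, 51, 56, 85, 54, 39, 80, 41, 66, 55,
   64, 29, 10, 31, 76, 25, 74, 19, 40, 21, 86, 95, 84, 9, 70, 11, 96, 65, 94, 99]

lemma B_mono : ∀ n, B n ≤ B (n + 1)
  | 0 => by simp [B]
  | n + 1 => by
    have ih := B_mono n
    show B (n + 1) ≤ 6 * B (n + 1) - B n
    omega

lemma B_cast : ∀ n : ℕ, ((B n : ℕ) : ZMod 100) = b n
  | 0 => by simp [B, b]
  | 1 => by simp [B, b]
  | n + 2 => by
    have h1 := B_cast n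
    have h2 := B_cast (n + 1)
    have hle : B n ≤ 6 * B (n + 1) :=
      le_trans (B_mono n) (Nat.le_mul_of_pos_left _ (by norm_num))
    show ((6 * B (n + 1) - B n : ℕ) : ZMod 100) = 6 * b (n + 1) - b n
    rw [Nat.cast_sub hle]
    push_cast
    rw [h1, h2]

lemma b_per : ∀ n, b (n + 60) = b n
  | 0 => by decide
  | 1 => by decide
  | n + 2 => by
    have h1 := b_per n
    have h2 := b_per (n + 1)
    have e : n + 2 + 60 = (n + 60) + 2 := by omega
    rw [e]
    show 6 * b (n + 60 + 1) - b (n + 60) = b (n + 2)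
    have e2 : n + 60 + 1 = (n + 1) + 60 := by omega
    rw [e2, h1, h2]
    rfl

lemma b_mod (n : ℕ) : b n = b (n % 60) := by
  have : ∀ q r, b (60 * q + r) = b r := by
    intro q
    induction q with
    | zero => intro r; simp
    | succ q ih =>
      intro r
      have e : 60 * (q + 1) + r = (60 * q + r) + 60 := by ring
      rw [e, b_per, ih]
  conv_lhs => rw [← Nat.div_add_mod n 60]
  exact this _ _

lemma b_tbl_aux : ∀ r ∈ Finset.range 60, b r = tbl.getD r 0 := by decide

lemma b_tbl (n : ℕ) : b n = tbl.getD (n % 60) 0 := by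
  rw [b_mod]
  exact b_tbl_aux _ (Finset.mem_range.mpr (Nat.mod_lt _ (by norm_num)))

set_option maxHeartbeats 1000000 in
lemma key : ∀ s ∈ Finset.range 60, ∀ L ∈ Finset.Icc 2 59,
    (9 * ∏ i ∈ Finset.range L, tbl.getD ((s + i) % 60) 0) ∉
      ([91, 92, 93, 94, 95, 96, 97, 98, 99] : List (ZMod 100)) := by
  decide

theorem stmt2 (m n k a : ℕ) (hm : 1 < m) (hk : 1 ≤ k) (hn : 1 ≤ n)
    (ha1 : 1 ≤ a) (ha9 : a ≤ 9) :
    9 * (∏ i ∈ Finset.range (k + 1), B (n + i)) ≠ a * (10 ^ m - 1) := by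
  intro heq
  have h100 : ((9 * ∏ i ∈ Finset.range (k + 1), B (n + i) : ℕ) : ZMod 100)
      = ((a * (10 ^ m - 1) : ℕ) : ZMod 100) := by rw [heq]
  -- compute RHS
  have hpow : (10 : ZMod 100) ^ m = 0 := by
    obtain ⟨t, rfl⟩ : ∃ t, m = 2 + t := ⟨m - 2, by omega⟩
    rw [pow_add, show (10 : ZMod 100) ^ 2 = 0 by decide, zero_mul]
  have hle1 : 1 ≤ 10 ^ m := Nat.one_le_pow _ _ (by norm_num)
  have hRHS : ((a * (10 ^ m - 1) : ℕ) : ZMod 100) = -(a : ZMod 100) := by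
    push_cast [Nat.cast_sub hle1]
    rw [hpow]
    ring
  have hLHS : ((9 * ∏ i ∈ Finset.range (k + 1), B (n + i) : ℕ) : ZMod 100)
      = 9 * ∏ i ∈ Finset.range (k + 1), b (n + i) := by
    push_cast
    congr 1
    exact Finset.prod_congr rfl fun i _ => B_cast _
  rw [hRHS, hLHS] at h100
  by_cases hL : k + 1 ≤ 59
  · -- finite check
    have hprod : ∏ i ∈ Finset.range (k + 1), b (n + i)
        = ∏ i ∈ Finset.range (k + 1), tbl.getD ((n % 60 + i) % 60) 0 := by
      refine Finset.prod_congr rfl fun i hi => ?_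
      rw [b_tbl]
      congr 1
      omega
    rw [hprod] at h100
    refine key (n % 60) (Finset.mem_range.mpr (Nat.mod_lt _ (by norm_num)))
      (k + 1) (Finset.mem_Icc.mpr ⟨by omega, hL⟩) ?_
    rw [h100]
    interval_cases a <;> decide
  · -- long run contains an index divisible by 60
    have hzero : ∏ i ∈ Finset.range (k + 1), b (n + i) = 0 := by
      set i0 := (60 - n % 60) % 60 with hi0
      apply Finset.prod_eq_zero (i := i0)
      · exact Finset.mem_range.mpr (by omega)
      · have : (n + i0) % 60 = 0 := by omega
        rw [b_mod, this]
        rfl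
    rw [hzero, mul_zero] at h100
    have : (a : ZMod 100) = 0 := neg_eq_zero.mp h100.symm
    rw [ZMod.natCast_eq_zero_iff] at this
    omega
end

section
/- For all n, B_n·B_{n+1} mod 5 ∈ {0, 1}; in particular B_n·B_{n+1} is never ≡ 2, 3 or 4 (mod 5). -/
lemma B_mono_rec (n : ℕ) : B n ≤ B (n + 1) ∧ B n + B (n + 2) = 6 * B (n + 1) := by
  induction n with
  | zero => simp [B]
  | succ k ih =>
    obtain ⟨h1, h2⟩ := ih
    have hle : B (k + 1) ≤ B (k + 2) := by
      show B (k + 1) ≤ 6 * B (k + 1) - B k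
      omega
    refine ⟨hle, ?_⟩
    show B (k + 1) + (6 * B (k + 2) - B (k + 1)) = 6 * B (k + 2)
    omega

def pat : ℕ → ℕ
  | 0 => 0
  | 1 => 1
  | 2 => 1
  | 3 => 0
  | 4 => 4
  | _ => 4

lemma B_mod (n : ℕ) : B n % 5 = pat (n % 6) ∧ B (n + 1) % 5 = pat ((n + 1) % 6) := by
  induction n with
  | zero => simp [B, pat]
  | succ k ih =>
    obtain ⟨h1, h2⟩ := ih
    refine ⟨h2, ?_⟩
    have hrec := (B_mono_rec k).2
    have h6 : 6 * B (k + 1) % 5 = B (k + 1) % 5 := by omega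
    have : B (k + 2) % 5 = (6 * B (k + 1) % 5 + 5 - B k % 5) % 5 := by omega
    rw [this, h6, h1, h2]
    have hk := Nat.mod_lt k (show 0 < 6 by norm_num)
    have : (k + 2) % 6 = ((k % 6) + 2) % 6 := by omega
    rw [this]
    have : (k + 1) % 6 = ((k % 6) + 1) % 6 := by omega
    rw [this]
    interval_cases h : k % 6 <;> simp [pat]

theorem stmt19 (n : ℕ) :
    (B n * B (n + 1) % 5 = 0 ∨ B n * B (n + 1) % 5 = 1) ∧
    B n * B (n + 1) % 5 ≠ 2 ∧ B n * B (n + 1) % 5 ≠ 3 ∧ B n * B (n + 1) % 5 ≠ 4 := by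
  obtain ⟨h1, h2⟩ := B_mod n
  have : B n * B (n + 1) % 5 = (B n % 5) * (B (n + 1) % 5) % 5 := by
    rw [Nat.mul_mod]
  rw [this, h1, h2]
  have hk := Nat.mod_lt n (show 0 < 6 by norm_num)
  have : (n + 1) % 6 = ((n % 6) + 1) % 6 := by omega
  rw [this]
  interval_cases h : n % 6 <;> simp [pat]
end
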